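/- arXiv:2203.05727 — 4 statements merged into one kernel-verified Lean document; each statement's English description precedes it below -/
import Mathlib

section
/- Let K be a finite abstract simplicial complex, 𝒱 a multivector field on K, S an isolated invariant set under 𝒱, and N an isolating set for S. Then the pair (pf_𝒱(cl(S), N), pf_𝒱(mo(S), N)) is an index pair for S in N under 𝒱. -/
open scoped Classical

namespace CDS

variable {α : Type*} [DecidableEq α]

/-- A finite abstract simplicial complex: a finite collection of nonempty finite
sets (simplices) closed under taking nonempty subsets. -/
def IsComplex (K : Finset (Finset α)) : Prop :=
  (∀ σ ∈ K, σ.Nonempty) ∧ ∀ σ ∈ K, ∀ τ : Finset α, τ ⊆ σ → τ.Nonempty → τ ∈ K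

/-- The closure of `A` in `K`. -/
def cl (K : Finset (Finset α)) (A : Set (Finset α)) : Set (Finset α) :=
  {σ | σ ∈ K ∧ ∃ τ ∈ A, σ ⊆ τ}

/-- `A` is closed in `K`. -/
def IsClosedIn (K : Finset (Finset α)) (A : Set (Finset α)) : Prop :=
  A = cl K A

/-- The mouth of `A` in `K`. -/
def mo (K : Finset (Finset α)) (A : Set (Finset α)) : Set (Finset α) :=
  cl K A \ A

/-- `A` is convex with respect to the face poset of `K`. -/
def IsConvex (K : Finset (Finset α)) (A : Set (Finset α)) : Prop :=
  ∀ σ ∈ A, ∀ τ ∈ A, ∀ ρ : Finset α, ρ ∈ K → σ ⊆ ρ → ρ ⊆ τ → ρ ∈ A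

/-- A multivector field on `K`: a partition of `K` into convex subsets
(multivectors). -/
structure MVF (K : Finset (Finset α)) where
  vecs : Set (Set (Finset α))
  sub : ∀ V ∈ vecs, V ⊆ (K : Set (Finset α))
  convex : ∀ V ∈ vecs, IsConvex K V
  nonempty : ∀ V ∈ vecs, V.Nonempty
  cover : ∀ σ ∈ K, ∃ V ∈ vecs, σ ∈ V
  disjoint : ∀ V ∈ vecs, ∀ W ∈ vecs, (V ∩ W).Nonempty → V = W

variable {K : Finset (Finset α)}

/-- `[σ]_𝒱`, the multivector of `𝒱` containing `σ`. -/
def mv (𝒱 : MVF K) (σ : Finset α) : Set (Finset α) :=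
  ⋃₀ {V | V ∈ 𝒱.vecs ∧ σ ∈ V}

/-- The induced multivalued map `F_𝒱` on simplices. -/
def Fv (𝒱 : MVF K) (σ : Finset α) : Set (Finset α) :=
  cl K {σ} ∪ mv 𝒱 σ

/-- `F_𝒱` applied to a set. -/
def Fs (𝒱 : MVF K) (A : Set (Finset α)) : Set (Finset α) :=
  ⋃ σ ∈ A, Fv 𝒱 σ

/-- `ρ` is a path of length `n` in `N`. -/
def IsPathIn (𝒱 : MVF K) (N : Set (Finset α)) (n : ℕ) (ρ : ℕ → Finset α) : Prop :=
  (∀ i < n, ρ (i + 1) ∈ Fv 𝒱 (ρ i)) ∧ ∀ i ≤ n, ρ i ∈ N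

/-- `ρ` is a (full) solution. -/
def IsSolution (𝒱 : MVF K) (ρ : ℤ → Finset α) : Prop :=
  ∀ i : ℤ, ρ (i + 1) ∈ Fv 𝒱 (ρ i)

/-- The mod 2 simplicial boundary operator (summing over faces in `K`). -/
def bdry (K : Finset (Finset α)) (c : Finset α → ZMod 2) (τ : Finset α) : ZMod 2 :=
  ∑ σ ∈ K, if τ ⊆ σ ∧ σ.card = τ.card + 1 then c σ else 0

/-- Relative `n`-chains of the pair `(P, E)`: mod 2 chains supported on
`(n+1)`-element simplices of `P \ E`. -/
def chains (P E : Set (Finset α)) (n : ℕ) : Set (Finset α → ZMod 2) :=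
  {c | ∀ σ, c σ ≠ 0 → σ ∈ P \ E ∧ σ.card = n + 1}

/-- The relative boundary operator of the pair `(P, E)`. -/
noncomputable def relBdry (K : Finset (Finset α)) (P E : Set (Finset α))
    (c : Finset α → ZMod 2) : Finset α → ZMod 2 :=
  (P \ E).indicator (bdry K c)

/-- The relative simplicial homology (with ℤ/2 coefficients) of the pair
`(P, E)` is nonzero: in some dimension there is a relative cycle that is not a
relative boundary. -/
def HasNonzeroHomology (K : Finset (Finset α)) (P E : Set (Finset α)) : Prop :=
  ∃ (n : ℕ) (c : Finset α → ZMod 2), c ∈ chains P E n ∧ relBdry K P E c = 0 ∧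
    ∀ d ∈ chains P E (n + 1), relBdry K P E d ≠ c

/-- A multivector `V` is critical if `H(cl V, mo V) ≠ 0`. -/
def IsCritical (K : Finset (Finset α)) (V : Set (Finset α)) : Prop :=
  HasNonzeroHomology K (cl K V) (mo K V)

/-- Essential solutions. -/
def IsEssential (𝒱 : MVF K) (ρ : ℤ → Finset α) : Prop :=
  IsSolution 𝒱 ρ ∧ ∀ i : ℤ, ¬ IsCritical K (mv 𝒱 (ρ i)) →
    (∃ j, j < i ∧ mv 𝒱 (ρ j) ≠ mv 𝒱 (ρ i)) ∧
    (∃ j, i < j ∧ mv 𝒱 (ρ j) ≠ mv 𝒱 (ρ i))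

/-- The invariant part of `A`: all simplices through which an essential
solution with values in `A` passes. -/
def invPart (𝒱 : MVF K) (A : Set (Finset α)) : Set (Finset α) :=
  {σ | ∃ ρ : ℤ → Finset α, IsEssential 𝒱 ρ ∧ (∀ i, ρ i ∈ A) ∧ ∃ i, ρ i = σ}

/-- `S` is an invariant set. -/
def IsInvariantSet (𝒱 : MVF K) (S : Set (Finset α)) : Prop :=
  invPart 𝒱 S = S

/-- The closed set `N` isolates `S`. -/
def Isolates (𝒱 : MVF K) (N S : Set (Finset α)) : Prop :=
  IsClosedIn K N ∧ Fs 𝒱 S ⊆ N ∧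
    ∀ (n : ℕ) (ρ : ℕ → Finset α), IsPathIn 𝒱 N n ρ → ρ 0 ∈ S → ρ n ∈ S →
      ∀ i ≤ n, ρ i ∈ S

/-- `S` is an isolated invariant set. -/
def IsIsolatedInvariantSet (𝒱 : MVF K) (S : Set (Finset α)) : Prop :=
  IsInvariantSet 𝒱 S ∧ ∃ N, Isolates 𝒱 N S

/-- `A` is `𝒱`-compatible: a union of multivectors of `𝒱`. -/
def IsCompatible (𝒱 : MVF K) (A : Set (Finset α)) : Prop :=
  ∃ R ⊆ 𝒱.vecs, A = ⋃₀ R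

/-- `(P, E)` is an index pair for `S` under `𝒱`. -/
def IsIndexPair (𝒱 : MVF K) (S P E : Set (Finset α)) : Prop :=
  IsClosedIn K P ∧ IsClosedIn K E ∧ E ⊆ P ∧
    Fs 𝒱 (P \ E) ⊆ P ∧ Fs 𝒱 E ∩ P ⊆ E ∧ invPart 𝒱 (P \ E) = S

/-- `(P, E)` is an index pair for `S` in `N` under `𝒱`. -/
def IsIndexPairIn (𝒱 : MVF K) (N S P E : Set (Finset α)) : Prop :=
  IsClosedIn K P ∧ IsClosedIn K E ∧ E ⊆ P ∧
    Fs 𝒱 (P \ E) ⊆ N ∧ Fs 𝒱 E ∩ N ⊆ E ∧ Fs 𝒱 P ∩ N ⊆ P ∧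
    invPart 𝒱 (P \ E) = S

/-- The push forward `pf_𝒱(A, N)` of `A` in `N`. -/
def pf (𝒱 : MVF K) (A N : Set (Finset α)) : Set (Finset α) :=
  {σ | σ ∈ N ∧ ∃ (n : ℕ) (ρ : ℕ → Finset α), IsPathIn 𝒱 N n ρ ∧ ρ 0 ∈ A ∧ ρ n = σ}

/-- `𝒲` is an atomic refinement of `𝒱` (equivalently, `𝒱` is an atomic
coarsening of `𝒲`). -/
def AtomicRefinement (𝒲 𝒱 : MVF K) : Prop :=
  (∀ W ∈ 𝒲.vecs, ∃ V ∈ 𝒱.vecs, W ⊆ V) ∧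
    (𝒱.vecs \ 𝒲.vecs).ncard = 1 ∧ (𝒲.vecs \ 𝒱.vecs).ncard = 2

/-- `𝒱` and `𝒲` are atomic rearrangements of each other. -/
def AtomicRearrangement (𝒱 𝒲 : MVF K) : Prop :=
  AtomicRefinement 𝒲 𝒱 ∨ AtomicRefinement 𝒱 𝒲

/-- `⟨B⟩_𝒱`: the intersection of all convex and `𝒱`-compatible subsets of `K`
containing `B`. -/
def hull (𝒱 : MVF K) (B : Set (Finset α)) : Set (Finset α) :=
  ⋂₀ {A | A ⊆ (K : Set (Finset α)) ∧ IsConvex K A ∧ IsCompatible 𝒱 A ∧ B ⊆ A}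

/-! ### Auxiliary lemmas -/

lemma mv_subset_cx (𝒱 : MVF K) (σ : Finset α) : mv 𝒱 σ ⊆ (K : Set (Finset α)) := by
  rintro τ ⟨V, ⟨hV, _⟩, hτ⟩
  exact 𝒱.sub V hV hτ

lemma mem_mv_symm (𝒱 : MVF K) {σ τ : Finset α} (h : τ ∈ mv 𝒱 σ) : σ ∈ mv 𝒱 τ := by
  obtain ⟨V, ⟨hV, hσ⟩, hτ⟩ := h
  exact ⟨V, ⟨hV, hτ⟩, hσ⟩

lemma Fv_subset_cx (𝒱 : MVF K) (σ : Finset α) : Fv 𝒱 σ ⊆ (K : Set (Finset α)) := by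
  rintro τ (⟨hτK, _⟩ | h)
  · exact hτK
  · exact mv_subset_cx 𝒱 σ h

lemma mem_Fv_self (𝒱 : MVF K) {σ : Finset α} (h : σ ∈ K) : σ ∈ Fv 𝒱 σ :=
  Or.inl ⟨h, σ, rfl, subset_rfl⟩

lemma mem_Fv_of_subset (𝒱 : MVF K) {σ τ : Finset α} (hτ : τ ∈ K) (h : τ ⊆ σ) :
    τ ∈ Fv 𝒱 σ :=
  Or.inl ⟨hτ, σ, rfl, h⟩

lemma closed_subset_cx {N : Set (Finset α)} (h : IsClosedIn K N) :
    N ⊆ (K : Set (Finset α)) := by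
  intro σ hσ
  rw [h] at hσ
  exact hσ.1

lemma mem_closed_of_subset {N : Set (Finset α)} (h : IsClosedIn K N)
    {σ τ : Finset α} (hσ : σ ∈ N) (hτ : τ ∈ K) (hsub : τ ⊆ σ) : τ ∈ N := by
  rw [h]
  exact ⟨hτ, σ, hσ, hsub⟩

/-- Extend a path by one step forward. -/
lemma path_snoc {𝒱 : MVF K} {N : Set (Finset α)} {n : ℕ} {ρ : ℕ → Finset α}
    (h : IsPathIn 𝒱 N n ρ) {τ : Finset α} (hF : τ ∈ Fv 𝒱 (ρ n)) (hN : τ ∈ N) :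
    ∃ ρ' : ℕ → Finset α, IsPathIn 𝒱 N (n + 1) ρ' ∧ ρ' 0 = ρ 0 ∧ ρ' (n + 1) = τ := by
  refine ⟨fun i => if i ≤ n then ρ i else τ, ⟨?_, ?_⟩, by simp, by simp⟩
  · intro i hi
    by_cases h1 : i + 1 ≤ n
    · have h0 : i ≤ n := by omega
      simpa [h1, h0] using h.1 i (by omega)
    · have hi' : i = n := by omega
      subst hi'
      simp [h1, hF]
  · intro i hi
    by_cases h0 : i ≤ n
    · simpa [h0] using h.2 i h0
    · simpa [h0] using hN

/-- Extend a path by one step backward. -/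
lemma path_cons {𝒱 : MVF K} {N : Set (Finset α)} {n : ℕ} {ρ : ℕ → Finset α}
    (h : IsPathIn 𝒱 N n ρ) {τ : Finset α} (hF : ρ 0 ∈ Fv 𝒱 τ) (hN : τ ∈ N) :
    ∃ ρ' : ℕ → Finset α, IsPathIn 𝒱 N (n + 1) ρ' ∧ ρ' 0 = τ ∧ ∀ i, ρ' (i + 1) = ρ i := by
  refine ⟨fun i => if i = 0 then τ else ρ (i - 1), ⟨?_, ?_⟩, by simp, fun i => by simp⟩
  · intro i hi
    rcases Nat.eq_zero_or_pos i with h0 | h0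
    · subst h0; simpa using hF
    · have h1 : ¬ (i = 0) := by omega
      have h2 : ¬ (i + 1 = 0) := by omega
      have h3 : i + 1 - 1 = (i - 1) + 1 := by omega
      simp only [h1, h2, if_false, h3]
      exact h.1 (i - 1) (by omega)
  · intro i hi
    rcases Nat.eq_zero_or_pos i with h0 | h0
    · subst h0; simpa using hN
    · have h1 : ¬ (i = 0) := by omega
      simp only [h1, if_false]
      exact h.2 (i - 1) (by omega)

/-- The tail of a path is a path. -/
lemma path_shift {𝒱 : MVF K} {N : Set (Finset α)} {n : ℕ} {ρ : ℕ → Finset α}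
    (h : IsPathIn 𝒱 N n ρ) (k : ℕ) (hk : k ≤ n) :
    IsPathIn 𝒱 N (n - k) (fun i => ρ (k + i)) := by
  constructor
  · intro i hi
    show ρ (k + (i + 1)) ∈ Fv 𝒱 (ρ (k + i))
    have : k + (i + 1) = (k + i) + 1 := by omega
    rw [this]
    exact h.1 (k + i) (by omega)
  · intro i hi
    exact h.2 (k + i) (by omega)

/-- Forward invariance of the push forward within `N`. -/
lemma pf_fwd {𝒱 : MVF K} {A N : Set (Finset α)} {σ τ : Finset α}
    (hσ : σ ∈ pf 𝒱 A N) (hF : τ ∈ Fv 𝒱 σ) (hN : τ ∈ N) : τ ∈ pf 𝒱 A N := by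
  obtain ⟨hσN, n, ρ, hρ, h0, hn⟩ := hσ
  rw [← hn] at hF
  obtain ⟨ρ', hρ', h0', hn'⟩ := path_snoc hρ hF hN
  exact ⟨hN, n + 1, ρ', hρ', h0'.symm ▸ h0, hn'⟩

lemma pf_subset {𝒱 : MVF K} (A N : Set (Finset α)) : pf 𝒱 A N ⊆ N :=
  fun _ h => h.1

/-- The push forward of any set in a closed set is closed. -/
lemma pf_closed {𝒱 : MVF K} {A N : Set (Finset α)} (hN : IsClosedIn K N) :
    IsClosedIn K (pf 𝒱 A N) := by
  apply Set.Subset.antisymm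
  · intro σ hσ
    exact ⟨closed_subset_cx hN hσ.1, σ, hσ, subset_rfl⟩
  · rintro τ ⟨hτK, σ, hσ, hsub⟩
    have hτN : τ ∈ N := mem_closed_of_subset hN hσ.1 hτK hsub
    exact pf_fwd hσ (mem_Fv_of_subset 𝒱 hτK hsub) hτN

lemma invariant_subset_cx {𝒱 : MVF K} {S : Set (Finset α)}
    (hS : IsInvariantSet 𝒱 S) : S ⊆ (K : Set (Finset α)) := by
  intro σ hσ
  rw [← hS] at hσ
  obtain ⟨ρ, hρ, hval, i, hi⟩ := hσ
  have := hρ.1 (i - 1)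
  rw [sub_add_cancel, hi] at this
  exact Fv_subset_cx 𝒱 _ this

lemma invariant_subset_isolating {𝒱 : MVF K} {S N : Set (Finset α)}
    (hS : IsInvariantSet 𝒱 S) (hN : Isolates 𝒱 N S) : S ⊆ N := by
  intro σ hσ
  have hσK : σ ∈ K := invariant_subset_cx hS hσ
  exact hN.2.1 (Set.mem_biUnion hσ (mem_Fv_self 𝒱 hσK))

/-- An isolated invariant set is `𝒱`-compatible. -/
lemma invariant_mv_subset {𝒱 : MVF K} {S N : Set (Finset α)}
    (hS : IsInvariantSet 𝒱 S) (hN : Isolates 𝒱 N S) {σ τ : Finset α}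
    (hσ : σ ∈ S) (hτ : τ ∈ mv 𝒱 σ) : τ ∈ S := by
  have hσN : σ ∈ N := invariant_subset_isolating hS hN hσ
  have hτN : τ ∈ N := hN.2.1 (Set.mem_biUnion hσ (Or.inr hτ))
  -- the path σ, τ, σ has both endpoints in S
  have hpath : IsPathIn 𝒱 N 2 (fun i => if i = 1 then τ else σ) := by
    constructor
    · intro i hi
      interval_cases i
      · simpa [Fv] using Or.inr hτ
      · simpa [Fv] using (Or.inr (mem_mv_symm 𝒱 hτ) : σ ∈ Fv 𝒱 τ)
    · intro i hi
      by_cases h1 : i = 1 <;> simp [h1, hσN, hτN]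
  have := hN.2.2 2 _ hpath (by simpa using hσ) (by simpa using hσ) 1 (by omega)
  simpa using this

/-- Key lemma: `pf 𝒱 (cl K S) N \ pf 𝒱 (mo K S) N ⊆ S`. -/
lemma pf_diff_subset {𝒱 : MVF K} {S N : Set (Finset α)}
    (hS : IsInvariantSet 𝒱 S) (hN : Isolates 𝒱 N S) :
    pf 𝒱 (cl K S) N \ pf 𝒱 (mo K S) N ⊆ S := by
  rintro σ ⟨⟨hσN, n, ρ, hρ, h0, hn⟩, hσE⟩
  -- a path in N from mo S to σ would put σ in E
  have hnotmo : ∀ k ≤ n, ρ k ∉ mo K S := by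
    intro k hk hmem
    apply hσE
    refine ⟨hσN, n - k, fun i => ρ (k + i), path_shift hρ k hk, by simpa using hmem, ?_⟩
    show ρ (k + (n - k)) = σ
    rw [Nat.add_sub_cancel' hk, hn]
  have h0S : ρ 0 ∈ S := by
    by_contra h
    exact hnotmo 0 (Nat.zero_le n) ⟨h0, h⟩
  -- by induction all values lie in S
  have hall : ∀ k ≤ n, ρ k ∈ S := by
    intro k hk
    induction k with
    | zero => exact h0S
    | succ m ih =>
      have hm : ρ m ∈ S := ih (by omega)
      rcases hρ.1 m (by omega) with hcl | hmv
      · -- a face of ρ m : either in S, or in mo S (contradiction)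
        obtain ⟨hK', τ, hτ, hsub⟩ := hcl
        simp only [Set.mem_singleton_iff] at hτ
        subst hτ
        by_contra h
        exact hnotmo (m + 1) hk ⟨⟨hK', ρ m, hm, hsub⟩, h⟩
      · exact invariant_mv_subset hS hN hm hmv
  rw [← hn]
  exact hall n le_rfl

lemma invPart_mono {𝒱 : MVF K} {A B : Set (Finset α)} (h : A ⊆ B) :
    invPart 𝒱 A ⊆ invPart 𝒱 B := by
  rintro σ ⟨ρ, hρ, hval, i, hi⟩
  exact ⟨ρ, hρ, fun j => h (hval j), i, hi⟩

/-- The push forwards of `(cl S, mo S)` in an isolating set `N` form an index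
pair for `S` in `N`. -/
theorem pushForward_indexPairIn (hK : IsComplex K) (𝒱 : MVF K)
    (S N : Set (Finset α)) (hS : IsIsolatedInvariantSet 𝒱 S)
    (hN : Isolates 𝒱 N S) :
    IsIndexPairIn 𝒱 N S (pf 𝒱 (cl K S) N) (pf 𝒱 (mo K S) N) := by
  obtain ⟨hSinv, -⟩ := hS
  set P := pf 𝒱 (cl K S) N with hP
  set E := pf 𝒱 (mo K S) N with hE
  have hSN : S ⊆ N := invariant_subset_isolating hSinv hN
  have hSK : S ⊆ (K : Set (Finset α)) := invariant_subset_cx hSinv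
  have hPE : P \ E ⊆ S := pf_diff_subset hSinv hN
  -- S ⊆ P
  have hSP : S ⊆ P := by
    intro σ hσ
    exact ⟨hSN hσ, 0, fun _ => σ, ⟨fun i hi => absurd hi (by omega),
      fun i _ => hSN hσ⟩, ⟨hSK hσ, σ, hσ, subset_rfl⟩, rfl⟩
  -- S ∩ E = ∅
  have hSE : ∀ σ ∈ S, σ ∉ E := by
    intro σ hσ ⟨hσN, n, ρ, hρ, h0, hn⟩
    obtain ⟨⟨h0K, τ, hτS, hsub⟩, h0S⟩ := h0
    have hτN : τ ∈ N := hSN hτS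
    obtain ⟨ρ', hρ', h0', hs'⟩ := path_cons hρ (mem_Fv_of_subset 𝒱 h0K hsub) hτN
    have := hN.2.2 (n + 1) ρ' hρ' (h0' ▸ hτS) (by rw [hs' n, hn]; exact hσ) 1 (by omega)
    rw [show (1 : ℕ) = 0 + 1 from rfl, hs' 0] at this
    exact h0S this
  refine ⟨pf_closed hN.1, pf_closed hN.1, ?_, ?_, ?_, ?_, ?_⟩
  · -- E ⊆ P
    rintro σ ⟨hσN, n, ρ, hρ, h0, hn⟩
    exact ⟨hσN, n, ρ, hρ, ⟨h0.1.1, h0.1.2⟩, hn⟩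
  · -- Fs (P \ E) ⊆ N
    intro τ hτ
    simp only [Fs, Set.mem_iUnion] at hτ
    obtain ⟨σ, hσ, hτF⟩ := hτ
    exact hN.2.1 (Set.mem_biUnion (hPE hσ) hτF)
  · -- Fs E ∩ N ⊆ E
    rintro τ ⟨hτF, hτN⟩
    simp only [Fs, Set.mem_iUnion] at hτF
    obtain ⟨σ, hσ, hτF⟩ := hτF
    exact pf_fwd hσ hτF hτN
  · -- Fs P ∩ N ⊆ P
    rintro τ ⟨hτF, hτN⟩
    simp only [Fs, Set.mem_iUnion] at hτF
    obtain ⟨σ, hσ, hτF⟩ := hτF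
    exact pf_fwd hσ hτF hτN
  · -- invPart (P \ E) = S
    apply Set.Subset.antisymm
    · intro σ hσ
      rw [← hSinv]
      exact invPart_mono hPE hσ
    · intro σ hσ
      have : σ ∈ invPart 𝒱 S := by rw [hSinv]; exact hσ
      obtain ⟨ρ, hρ, hval, i, hi⟩ := this
      exact ⟨ρ, hρ, fun j => ⟨hSP (hval j), hSE _ (hval j)⟩, i, hi⟩

end CDS
end

section
/- Let K be a finite abstract simplicial complex, let 𝒱₁ and 𝒱₂ be multivector fields on K, and let N ⊆ K be closed. Define 𝒱₁ ⊼ 𝒱₂ := {V₁ ∩ V₂ : V₁ ∈ 𝒱₁, V₂ ∈ 𝒱₂, V₁ ∩ V₂ ≠ ∅}, which is a multivector field on K. Suppose (P₁, E₁) is an index pair in N for some isolated invariant set S₁ under 𝒱₁, and (P₂, E₂) is an index pair in N for some isolated invariant set S₂ under 𝒱₂. Then, setting S := inv_{𝒱₁ ⊼ 𝒱₂}((P₁ ∩ P₂) \ (E₁ ∩ E₂)), N is an isolating set for S under 𝒱₁ ⊼ 𝒱₂ and (P₁ ∩ P₂, E₁ ∩ E₂) is an index pair for S in N under 𝒱₁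 ⊼ 𝒱₂. -/
open scoped Classical

namespace CDS

variable {α : Type*} [DecidableEq α]

variable {K : Finset (Finset α)}

/-- The common refinement `𝒱₁ ⊼ 𝒱₂ = {V₁ ∩ V₂ : V₁ ∈ 𝒱₁, V₂ ∈ 𝒱₂}` of two
multivector fields is again a multivector field on `K`. -/
def interMVF (𝒱₁ 𝒱₂ : MVF K) : MVF K where
  vecs := {W | ∃ V₁ ∈ 𝒱₁.vecs, ∃ V₂ ∈ 𝒱₂.vecs, W = V₁ ∩ V₂ ∧ W.Nonempty}
  sub := by
    rintro W ⟨V₁, h₁, V₂, h₂, rfl, -⟩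
    exact fun x hx => 𝒱₁.sub V₁ h₁ hx.1
  convex := by
    rintro W ⟨V₁, h₁, V₂, h₂, rfl, -⟩ σ hσ τ hτ ρ hρK hσρ hρτ
    exact ⟨𝒱₁.convex V₁ h₁ σ hσ.1 τ hτ.1 ρ hρK hσρ hρτ,
      𝒱₂.convex V₂ h₂ σ hσ.2 τ hτ.2 ρ hρK hσρ hρτ⟩
  nonempty := by
    rintro W ⟨V₁, h₁, V₂, h₂, rfl, hne⟩
    exact hne
  cover := by
    intro σ hσ
    obtain ⟨V₁, h₁, hσ₁⟩ := 𝒱₁.cover σ hσ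
    obtain ⟨V₂, h₂, hσ₂⟩ := 𝒱₂.cover σ hσ
    exact ⟨V₁ ∩ V₂, ⟨V₁, h₁, V₂, h₂, rfl, ⟨σ, hσ₁, hσ₂⟩⟩, hσ₁, hσ₂⟩
  disjoint := by
    rintro W ⟨V₁, h₁, V₂, h₂, rfl, -⟩ W' ⟨V₁', h₁', V₂', h₂', rfl, -⟩ ⟨x, hx⟩
    rw [𝒱₁.disjoint V₁ h₁ V₁' h₁' ⟨x, hx.1.1, hx.2.1⟩,
      𝒱₂.disjoint V₂ h₂ V₂' h₂' ⟨x, hx.1.2, hx.2.2⟩]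

lemma mv_inter_subset_left (𝒱₁ 𝒱₂ : MVF K) (σ : Finset α) :
    mv (interMVF 𝒱₁ 𝒱₂) σ ⊆ mv 𝒱₁ σ := by
  rintro τ ⟨W, ⟨⟨V₁, h₁, V₂, h₂, rfl, -⟩, hσ⟩, hτ⟩
  exact ⟨V₁, ⟨h₁, hσ.1⟩, hτ.1⟩

lemma mv_inter_subset_right (𝒱₁ 𝒱₂ : MVF K) (σ : Finset α) :
    mv (interMVF 𝒱₁ 𝒱₂) σ ⊆ mv 𝒱₂ σ := by
  rintro τ ⟨W, ⟨⟨V₁, h₁, V₂, h₂, rfl, -⟩, hσ⟩, hτ⟩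
  exact ⟨V₂, ⟨h₂, hσ.2⟩, hτ.2⟩

lemma Fv_inter_subset_left (𝒱₁ 𝒱₂ : MVF K) (σ : Finset α) :
    Fv (interMVF 𝒱₁ 𝒱₂) σ ⊆ Fv 𝒱₁ σ :=
  Set.union_subset_union_right _ (mv_inter_subset_left 𝒱₁ 𝒱₂ σ)

lemma Fv_inter_subset_right (𝒱₁ 𝒱₂ : MVF K) (σ : Finset α) :
    Fv (interMVF 𝒱₁ 𝒱₂) σ ⊆ Fv 𝒱₂ σ :=
  Set.union_subset_union_right _ (mv_inter_subset_right 𝒱₁ 𝒱₂ σ)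

lemma mem_Fs_of_mem {𝒱 : MVF K} {A : Set (Finset α)} {σ τ : Finset α}
    (hσ : σ ∈ A) (hτ : τ ∈ Fv 𝒱 σ) : τ ∈ Fs 𝒱 A :=
  Set.mem_biUnion hσ hτ

/-- Forward invariance along a path in `N`. -/
lemma fwd_invariant (𝒱 : MVF K) {A N : Set (Finset α)}
    (hA : Fs 𝒱 A ∩ N ⊆ A) {n : ℕ} {ρ : ℕ → Finset α}
    (hstep : ∀ i < n, ρ (i + 1) ∈ Fv 𝒱 (ρ i)) (hmem : ∀ i ≤ n, ρ i ∈ N)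
    {i : ℕ} (hi : ρ i ∈ A) : ∀ j, i ≤ j → j ≤ n → ρ j ∈ A := by
  intro j hij hjn
  induction j with
  | zero => exact (Nat.le_zero.mp hij) ▸ hi
  | succ k ih =>
    rcases Nat.lt_or_ge k i with hk | hk
    · have : i = k + 1 := by omega
      exact this ▸ hi
    · have hkA : ρ k ∈ A := ih hk (by omega)
      exact hA ⟨mem_Fs_of_mem hkA (hstep k (by omega)), hmem (k + 1) hjn⟩

lemma invPart_subset (𝒱 : MVF K) (A : Set (Finset α)) : invPart 𝒱 A ⊆ A := by
  rintro σ ⟨ρ, -, hvals, i, rfl⟩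
  exact hvals i

lemma isClosedIn_inter {P Q : Set (Finset α)} (hP : IsClosedIn K P)
    (hQ : IsClosedIn K Q) : IsClosedIn K (P ∩ Q) := by
  apply Set.Subset.antisymm
  · intro σ hσ
    have hσK : σ ∈ K := (hP ▸ hσ.1 : σ ∈ cl K P).1
    exact ⟨hσK, σ, hσ, subset_rfl⟩
  · rintro σ ⟨hσK, τ, hτ, hστ⟩
    exact ⟨hP ▸ ⟨hσK, τ, hτ.1, hστ⟩, hQ ▸ ⟨hσK, τ, hτ.2, hστ⟩⟩

/-- Splicing a path between two essential solutions: every point of a path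
inside `A` whose endpoints lie in the invariant part of `A` lies in the
invariant part of `A`. -/
lemma path_subset_invPart (𝒲 : MVF K) {A : Set (Finset α)} {n : ℕ}
    {ρ : ℕ → Finset α} (hstep : ∀ i < n, ρ (i + 1) ∈ Fv 𝒲 (ρ i))
    (hA : ∀ i ≤ n, ρ i ∈ A) (h0 : ρ 0 ∈ invPart 𝒲 A)
    (hn : ρ n ∈ invPart 𝒲 A) : ∀ i ≤ n, ρ i ∈ invPart 𝒲 A := by
  obtain ⟨γ, ⟨hγsol, hγess⟩, hγA, k₀, hγk⟩ := h0
  obtain ⟨δ, ⟨hδsol, hδess⟩, hδA, k₁, hδk⟩ := hn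
  set σ : ℤ → Finset α := fun j =>
    if j ≤ 0 then γ (j + k₀) else if j ≤ (n : ℤ) then ρ j.toNat
      else δ (j - n + k₁) with hσdef
  have hneg : ∀ j : ℤ, j ≤ 0 → σ j = γ (j + k₀) := fun j hj => if_pos hj
  have hmid : ∀ j : ℤ, 0 ≤ j → j ≤ (n : ℤ) → σ j = ρ j.toNat := by
    intro j h0j hjn
    rcases eq_or_lt_of_le h0j with h | h
    · have : σ j = γ (j + k₀) := hneg j (by omega)
      rw [this, ← h]
      simpa using hγk
    · simp only [hσdef]
      rw [if_neg (by omega), if_pos hjn]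
  have hpos : ∀ j : ℤ, (n : ℤ) ≤ j → σ j = δ (j - n + k₁) := by
    intro j hjn
    rcases le_or_gt j 0 with h | h
    · have hn0 : (n : ℤ) = 0 := by omega
      have hj0 : j = 0 := by omega
      subst hj0
      rw [hneg 0 le_rfl]
      have ha : (0:ℤ) - n + k₁ = k₁ := by omega
      have hb : (0:ℤ) + k₀ = k₀ := by omega
      rw [ha, hb, hγk, hδk]
      have hc : n = 0 := by exact_mod_cast hn0
      rw [hc]
    · rcases le_or_gt j (n : ℤ) with h' | h'
      · have hj : j = (n : ℤ) := le_antisymm h' hjn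
        rw [hmid j (by omega) h', hj]
        simp only [Int.toNat_natCast, sub_self, zero_add]
        exact hδk.symm ▸ rfl
      · simp only [hσdef]
        rw [if_neg (by omega), if_neg (by omega)]
  have hsol : IsSolution 𝒲 σ := by
    intro j
    rcases lt_trichotomy j 0 with hj | hj | hj
    · rw [hneg j (by omega), hneg (j + 1) (by omega)]
      have := hγsol (j + k₀)
      simpa [add_right_comm] using this
    · subst hj
      rcases Nat.eq_zero_or_pos n with hn0 | hn0
    -- n = 0 : step is into the δ part
      · rw [hpos (0 + 1) (by omega), hpos 0 (by omega)]
        have := hδsol (0 - n + k₁)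
        have h' : (0:ℤ) + 1 - n + k₁ = 0 - n + k₁ + 1 := by ring
        rw [h']
        exact this
      · rw [hmid (0 + 1) (by omega) (by omega), hmid 0 le_rfl (by omega)]
        simpa using hstep 0 hn0
    · rcases lt_or_ge j (n : ℤ) with hjn | hjn
      · rw [hmid j (by omega) (by omega), hmid (j + 1) (by omega) (by omega)]
        have h1 : (j + 1).toNat = j.toNat + 1 := by omega
        rw [h1]
        exact hstep j.toNat (by omega)
      · rw [hpos j hjn, hpos (j + 1) (by omega)]
        have := hδsol (j - n + k₁)
        have harg : j + 1 - n + k₁ = j - n + k₁ + 1 := by ring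
        rw [harg]
        exact this
  have hvals : ∀ j, σ j ∈ A := by
    intro j
    rcases le_or_gt j 0 with hj | hj
    · rw [hneg j hj]; exact hγA _
    · rcases le_or_gt j (n : ℤ) with hjn | hjn
      · rw [hmid j (by omega) hjn]; exact hA j.toNat (by omega)
      · rw [hpos j (by omega)]; exact hδA _
  have hess : IsEssential 𝒲 σ := by
    refine ⟨hsol, fun i hcrit => ?_⟩
    constructor
    · by_contra hcon
      push_neg at hcon
      set t : ℤ := min i 0 - 1 with ht
      have ht0 : t ≤ 0 := by omega
      have hti : t < i := by omega
      have hσt : σ t = γ (t + k₀) := hneg t ht0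
      have htm : mv 𝒲 (γ (t + k₀)) = mv 𝒲 (σ i) := by
        rw [← hσt]; exact hcon t hti
      have hncrit : ¬ IsCritical K (mv 𝒲 (γ (t + k₀))) := by
        rw [htm]; exact hcrit
      obtain ⟨⟨j, hjt, hjne⟩, -⟩ := hγess (t + k₀) hncrit
      have hj0 : j - k₀ ≤ 0 := by omega
      have hσj : σ (j - k₀) = γ j := by
        rw [hneg _ hj0]; congr 1; omega
      have : mv 𝒲 (σ (j - k₀)) = mv 𝒲 (σ i) := hcon (j - k₀) (by omega)
      rw [hσj] at this
      exact hjne (this.trans htm.symm)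
    · by_contra hcon
      push_neg at hcon
      set t : ℤ := max i (n : ℤ) + 1 with ht
      have htn : (n : ℤ) ≤ t := by omega
      have hti : i < t := by omega
      have hσt : σ t = δ (t - n + k₁) := hpos t htn
      have htm : mv 𝒲 (δ (t - n + k₁)) = mv 𝒲 (σ i) := by
        rw [← hσt]; exact hcon t hti
      have hncrit : ¬ IsCritical K (mv 𝒲 (δ (t - n + k₁))) := by
        rw [htm]; exact hcrit
      obtain ⟨-, ⟨j, hjt, hjne⟩⟩ := hδess (t - n + k₁) hncrit
      have hjn : (n : ℤ) ≤ j + n - k₁ := by omega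
      have hσj : σ (j + n - k₁) = δ j := by
        rw [hpos _ hjn]; congr 1; omega
      have : mv 𝒲 (σ (j + n - k₁)) = mv 𝒲 (σ i) := hcon (j + n - k₁) (by omega)
      rw [hσj] at this
      exact hjne (this.trans htm.symm)
  intro i hin
  refine ⟨σ, hess, hvals, (i : ℤ), ?_⟩
  rw [hmid (i : ℤ) (by omega) (by omega)]
  simp

/-- If `(P₁, E₁)` and `(P₂, E₂)` are index pairs in `N` for isolated invariant
sets `S₁` under `𝒱₁` and `S₂` under `𝒱₂`, then, with
`S = inv_{𝒱₁ ⊼ 𝒱₂}((P₁ ∩ P₂) \ (E₁ ∩ E₂))`, the set `N` isolates `S` under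
`𝒱₁ ⊼ 𝒱₂` and `(P₁ ∩ P₂, E₁ ∩ E₂)` is an index pair for `S` in `N` under
`𝒱₁ ⊼ 𝒱₂`. -/
theorem inter_indexPairIn (hK : IsComplex K) (𝒱₁ 𝒱₂ : MVF K)
    (N : Set (Finset α)) (hN : IsClosedIn K N)
    (S₁ S₂ P₁ E₁ P₂ E₂ : Set (Finset α))
    (hS₁ : IsIsolatedInvariantSet 𝒱₁ S₁) (hN₁ : Isolates 𝒱₁ N S₁)
    (h₁ : IsIndexPairIn 𝒱₁ N S₁ P₁ E₁)
    (hS₂ : IsIsolatedInvariantSet 𝒱₂ S₂) (hN₂ : Isolates 𝒱₂ N S₂)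
    (h₂ : IsIndexPairIn 𝒱₂ N S₂ P₂ E₂) :
    Isolates (interMVF 𝒱₁ 𝒱₂) N
        (invPart (interMVF 𝒱₁ 𝒱₂) ((P₁ ∩ P₂) \ (E₁ ∩ E₂))) ∧
      IsIndexPairIn (interMVF 𝒱₁ 𝒱₂) N
        (invPart (interMVF 𝒱₁ 𝒱₂) ((P₁ ∩ P₂) \ (E₁ ∩ E₂)))
        (P₁ ∩ P₂) (E₁ ∩ E₂) := by
  obtain ⟨hP₁cl, hE₁cl, hE₁P₁, hFPE₁, hFE₁, hFP₁, -⟩ := h₁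
  obtain ⟨hP₂cl, hE₂cl, hE₂P₂, hFPE₂, hFE₂, hFP₂, -⟩ := h₂
  set 𝒲 := interMVF 𝒱₁ 𝒱₂ with h𝒲
  set A : Set (Finset α) := (P₁ ∩ P₂) \ (E₁ ∩ E₂) with hAdef
  -- `F_𝒲(A) ⊆ N`
  have hFsA : Fs 𝒲 A ⊆ N := by
    rintro τ hτ
    rw [Fs, Set.mem_iUnion₂] at hτ
    obtain ⟨σ, hσA, hτσ⟩ := hτ
    rcases Classical.em (σ ∈ E₁) with hE | hE
    · have hσ2 : σ ∈ P₂ \ E₂ := ⟨hσA.1.2, fun h => hσA.2 ⟨hE, h⟩⟩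
      exact hFPE₂ (mem_Fs_of_mem hσ2 (Fv_inter_subset_right 𝒱₁ 𝒱₂ σ hτσ))
    · have hσ1 : σ ∈ P₁ \ E₁ := ⟨hσA.1.1, hE⟩
      exact hFPE₁ (mem_Fs_of_mem hσ1 (Fv_inter_subset_left 𝒱₁ 𝒱₂ σ hτσ))
  have hSA : invPart 𝒲 A ⊆ A := invPart_subset 𝒲 A
  -- every `𝒲`-path in `N` with endpoints in the invariant part stays in it
  have hpaths : ∀ (n : ℕ) (ρ : ℕ → Finset α), IsPathIn 𝒲 N n ρ →
      ρ 0 ∈ invPart 𝒲 A → ρ n ∈ invPart 𝒲 A →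
      ∀ i ≤ n, ρ i ∈ invPart 𝒲 A := by
    intro n ρ ⟨hstep, hmem⟩ h0 hn
    have hstep1 : ∀ i < n, ρ (i + 1) ∈ Fv 𝒱₁ (ρ i) :=
      fun i hi => Fv_inter_subset_left 𝒱₁ 𝒱₂ (ρ i) (hstep i hi)
    have hstep2 : ∀ i < n, ρ (i + 1) ∈ Fv 𝒱₂ (ρ i) :=
      fun i hi => Fv_inter_subset_right 𝒱₁ 𝒱₂ (ρ i) (hstep i hi)
    have h0A : ρ 0 ∈ A := hSA h0
    have hnA : ρ n ∈ A := hSA hn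
    have hP : ∀ i ≤ n, ρ i ∈ P₁ ∩ P₂ := fun i hi =>
      ⟨fwd_invariant 𝒱₁ hFP₁ hstep1 hmem h0A.1.1 i (Nat.zero_le i) hi,
       fwd_invariant 𝒱₂ hFP₂ hstep2 hmem h0A.1.2 i (Nat.zero_le i) hi⟩
    have hE : ∀ i ≤ n, ρ i ∉ E₁ ∩ E₂ := by
      intro i hi hiE
      exact hnA.2 ⟨fwd_invariant 𝒱₁ hFE₁ hstep1 hmem hiE.1 n hi le_rfl,
        fwd_invariant 𝒱₂ hFE₂ hstep2 hmem hiE.2 n hi le_rfl⟩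
    exact path_subset_invPart 𝒲 hstep (fun i hi => ⟨hP i hi, hE i hi⟩) h0 hn
  refine ⟨⟨hN, ?_, hpaths⟩, isClosedIn_inter hP₁cl hP₂cl,
    isClosedIn_inter hE₁cl hE₂cl,
    Set.inter_subset_inter hE₁P₁ hE₂P₂, hFsA, ?_, ?_, rfl⟩
  · -- `F_𝒲(S) ⊆ N`
    exact Set.Subset.trans (by
      intro τ hτ
      rw [Fs, Set.mem_iUnion₂] at hτ ⊢
      obtain ⟨σ, hσ, hτσ⟩ := hτ
      exact ⟨σ, hSA hσ, hτσ⟩) hFsA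
  · -- `F_𝒲(E₁ ∩ E₂) ∩ N ⊆ E₁ ∩ E₂`
    rintro τ ⟨hτF, hτN⟩
    rw [Fs, Set.mem_iUnion₂] at hτF
    obtain ⟨σ, hσ, hτσ⟩ := hτF
    exact ⟨hFE₁ ⟨mem_Fs_of_mem hσ.1 (Fv_inter_subset_left 𝒱₁ 𝒱₂ σ hτσ), hτN⟩,
      hFE₂ ⟨mem_Fs_of_mem hσ.2 (Fv_inter_subset_right 𝒱₁ 𝒱₂ σ hτσ), hτN⟩⟩
  · -- `F_𝒲(P₁ ∩ P₂) ∩ N ⊆ P₁ ∩ P₂`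
    rintro τ ⟨hτF, hτN⟩
    rw [Fs, Set.mem_iUnion₂] at hτF
    obtain ⟨σ, hσ, hτσ⟩ := hτF
    exact ⟨hFP₁ ⟨mem_Fs_of_mem hσ.1 (Fv_inter_subset_left 𝒱₁ 𝒱₂ σ hτσ), hτN⟩,
      hFP₂ ⟨mem_Fs_of_mem hσ.2 (Fv_inter_subset_right 𝒱₁ 𝒱₂ σ hτσ), hτN⟩⟩

end CDS
end

section
/- Let K be a finite abstract simplicial complex, 𝒱 a multivector field on K, and S an isolated invariant set under 𝒱. If (P, E) is an index pair for S under 𝒱, then P is an isolating set for S. -/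
open scoped Classical

namespace CDS

variable {α : Type*} [DecidableEq α]

variable {K : Finset (Finset α)}

/-- If `(P, E)` is an index pair for `S`, then `P` is an isolating set for
`S`. -/
theorem indexPair_fst_isolates (hK : IsComplex K) (𝒱 : MVF K)
    (S P E : Set (Finset α)) (hS : IsIsolatedInvariantSet 𝒱 S)
    (hPE : IsIndexPair 𝒱 S P E) :
    Isolates 𝒱 P S := by
  obtain ⟨hPcl, hEcl, hEP, hFPE, hFE, hInv⟩ := hPE
  have hSsub : S ⊆ P \ E := by
    intro σ hσ
    rw [← hInv] at hσ
    obtain ⟨ρ, _, hρA, i, hi⟩ := hσ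
    rw [← hi]; exact hρA i
  refine ⟨hPcl, ?_, ?_⟩
  · intro σ hσ
    obtain ⟨τ, hτ, hστ⟩ := Set.mem_iUnion₂.mp hσ
    exact hFPE (Set.mem_iUnion₂.mpr ⟨τ, hSsub hτ, hστ⟩)
  · intro n ρ hpath h0 hn i hin
    -- path values are in P \ E
    have hE_tail : ∀ d i, i + d = n → ρ i ∈ E → ρ n ∈ E := by
      intro d
      induction d with
      | zero => intro i hi hE; exact (by omega : i = n) ▸ hE
      | succ d ih =>
          intro i hi hE
          have h1 : ρ (i + 1) ∈ E := by
            apply hFE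
            constructor
            · exact Set.mem_iUnion₂.mpr ⟨ρ i, hE, hpath.1 i (by omega)⟩
            · exact hpath.2 (i + 1) (by omega)
          exact ih (i + 1) (by omega) h1
    have hnotE : ∀ j, j ≤ n → ρ j ∈ P \ E := by
      intro j hj
      refine ⟨hpath.2 j hj, fun hE => ?_⟩
      exact (hSsub hn).2 (hE_tail (n - j) j (by omega) hE)
    -- fix zero-case of hE_tail
    -- essential solutions through endpoints
    have h0' := h0; rw [← hInv] at h0'
    obtain ⟨φ, hφess, hφA, i0, hφ0⟩ := h0'
    have hn' := hn; rw [← hInv] at hn'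
    obtain ⟨ψ, hψess, hψA, j0, hψ0⟩ := hn'
    set ζ : ℤ → Finset α := fun k =>
      if k ≤ 0 then φ (k + i0) else if k ≤ (n : ℤ) then ρ k.toNat
      else ψ (k - n + j0) with hζdef
    have hζ_neg : ∀ k : ℤ, k ≤ 0 → ζ k = φ (k + i0) := by
      intro k hk; simp [hζdef, hk]
    have hζ_mid : ∀ k : ℤ, 0 ≤ k → k ≤ (n : ℤ) → ζ k = ρ k.toNat := by
      intro k hk1 hk2
      rcases eq_or_lt_of_le hk1 with h | h
      · have : k = 0 := h.symm
        subst this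
        rw [hζ_neg 0 le_rfl]
        simpa using hφ0
      · simp only [hζdef]
        rw [if_neg (by omega), if_pos hk2]
    have hζ_pos : ∀ k : ℤ, (n : ℤ) ≤ k → ζ k = ψ (k - n + j0) := by
      intro k hk
      rcases eq_or_lt_of_le hk with h | h
      · have hk0 : k = (n : ℤ) := h.symm
        subst hk0
        rw [hζ_mid _ (by positivity) le_rfl]
        have : ((n : ℤ)).toNat = n := by omega
        rw [this]
        have : (n : ℤ) - n + j0 = j0 := by ring
        rw [this, hψ0]
      · simp only [hζdef]
        rw [if_neg (by omega), if_neg (by omega)]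
    have hζA : ∀ k : ℤ, ζ k ∈ P \ E := by
      intro k
      rcases le_or_gt k 0 with hk | hk
      · rw [hζ_neg k hk]; exact hφA _
      · rcases le_or_gt k (n : ℤ) with hk2 | hk2
        · rw [hζ_mid k hk.le hk2]; exact hnotE _ (by omega)
        · rw [hζ_pos k hk2.le]; exact hψA _
    have hsol : IsSolution 𝒱 ζ := by
      intro k
      rcases lt_trichotomy k 0 with hk | hk | hk
      · rw [hζ_neg k hk.le, hζ_neg (k + 1) (by omega)]
        have := hφess.1 (k + i0)
        have heq : k + 1 + i0 = k + i0 + 1 := by ring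
        rw [heq]; exact this
      · subst hk
        rcases Nat.eq_zero_or_pos n with hn0 | hn0
        · rw [hζ_pos 0 (by omega), hζ_pos (0+1) (by omega)]
          have := hψess.1 (0 - n + j0)
          have heq : (0 : ℤ) + 1 - n + j0 = 0 - n + j0 + 1 := by ring
          rw [heq]; exact this
        · rw [hζ_mid 0 le_rfl (by positivity), hζ_mid (0+1) (by omega) (by omega)]
          have h01 : ((0 : ℤ)+1).toNat = (0 : ℤ).toNat + 1 := by omega
          rw [h01]
          exact hpath.1 _ (by omega)
      · rcases lt_or_ge k (n : ℤ) with hk2 | hk2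
        · rw [hζ_mid k hk.le hk2.le, hζ_mid (k + 1) (by omega) (by omega)]
          have h01 : (k + 1).toNat = k.toNat + 1 := by omega
          rw [h01]
          exact hpath.1 _ (by omega)
        · rw [hζ_pos k hk2, hζ_pos (k + 1) (by omega)]
          have := hψess.1 (k - n + j0)
          have heq : k + 1 - n + j0 = k - n + j0 + 1 := by ring
          rw [heq]; exact this
    have hess : IsEssential 𝒱 ζ := by
      refine ⟨hsol, fun k hk => ?_⟩
      constructor
      · by_contra hc
        push_neg at hc
        set m : ℤ := min k 0 - 1 with hm
        have hm0 : m ≤ 0 := by omega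
        have hmk : m < k := by omega
        have hζm : ζ m = φ (m + i0) := hζ_neg m hm0
        have hmveq : mv 𝒱 (φ (m + i0)) = mv 𝒱 (ζ k) := by
          rw [← hζm]; exact hc m hmk
        have hncrit : ¬ IsCritical K (mv 𝒱 (φ (m + i0))) := by
          rw [hmveq]; exact hk
        obtain ⟨⟨j, hj, hne⟩, -⟩ := hφess.2 (m + i0) hncrit
        have hζj : ζ (j - i0) = φ j := by
          rw [hζ_neg (j - i0) (by omega)]
          congr 1; ring
        have := hc (j - i0) (by omega)
        rw [hζj] at this
        exact hne (this.trans hmveq.symm)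
      · by_contra hc
        push_neg at hc
        set m : ℤ := max k n + 1 with hm
        have hm0 : (n : ℤ) ≤ m := by omega
        have hmk : k < m := by omega
        have hζm : ζ m = ψ (m - n + j0) := hζ_pos m hm0
        have hmveq : mv 𝒱 (ψ (m - n + j0)) = mv 𝒱 (ζ k) := by
          rw [← hζm]; exact hc m hmk
        have hncrit : ¬ IsCritical K (mv 𝒱 (ψ (m - n + j0))) := by
          rw [hmveq]; exact hk
        obtain ⟨-, ⟨j, hj, hne⟩⟩ := hψess.2 (m - n + j0) hncrit
        have hζj : ζ (j + n - j0) = ψ j := by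
          rw [hζ_pos (j + n - j0) (by omega)]
          congr 1; ring
        have := hc (j + n - j0) (by omega)
        rw [hζj] at this
        exact hne (this.trans hmveq.symm)
    rw [← hInv]
    refine ⟨ζ, hess, hζA, (i : ℤ), ?_⟩
    rw [hζ_mid (i : ℤ) (by positivity) (by exact_mod_cast hin)]
    simp

end CDS
end

section
/- Let K be a finite abstract simplicial complex, let S be an isolated invariant set under a multivector field 𝒱 on K, and let 𝒱' be an atomic coarsening of 𝒱 whose merged multivector V satisfies V ∩ S ≠ ∅ and V ⊄ S. Let A := ⟨S ∪ V⟩_{𝒱'} and S' := inv_{𝒱'}(A). If S'' is an isolated invariant set under 𝒱' with S ⊆ S'', then S' ⊆ S''. -/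
open scoped Classical

namespace CDS

variable {α : Type*} [DecidableEq α]

variable {K : Finset (Finset α)}

lemma Fv_subset_K {K : Finset (Finset α)} (𝒱 : MVF K) (σ : Finset α) :
    Fv 𝒱 σ ⊆ (K : Set (Finset α)) := by
  rintro τ (⟨hτK, _⟩ | ⟨W, ⟨hW, _⟩, hτW⟩)
  · exact hτK
  · exact 𝒱.sub W hW hτW

lemma self_mem_Fv {K : Finset (Finset α)} (𝒱 : MVF K) {σ : Finset α} (h : σ ∈ K) :
    σ ∈ Fv 𝒱 σ :=
  Or.inl ⟨h, σ, rfl, subset_rfl⟩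

lemma invPart_subset_K {K : Finset (Finset α)} (𝒱 : MVF K) (A : Set (Finset α)) :
    invPart 𝒱 A ⊆ (K : Set (Finset α)) := by
  rintro σ ⟨ρ, ⟨hsol, _⟩, _, i, rfl⟩
  have h := hsol (i - 1)
  rw [sub_add_cancel] at h
  exact Fv_subset_K 𝒱 _ h

/-- Canonicity of the choice in Step (f) of the Tracking Protocol: with
`A = ⟨S ∪ V⟩_𝒱'` and `S' = inv_𝒱'(A)`, any isolated invariant set `S''` under
`𝒱'` containing `S` also contains `S'`. -/
theorem persistence_step_minimal (hK : IsComplex K) (𝒱 𝒱' : MVF K)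
    (S : Set (Finset α)) (hS : IsIsolatedInvariantSet 𝒱 S)
    (hco : AtomicRefinement 𝒱 𝒱') (V : Set (Finset α))
    (hV : V ∈ 𝒱'.vecs \ 𝒱.vecs)
    (hVS : (V ∩ S).Nonempty) (hVnS : ¬ V ⊆ S)
    (S'' : Set (Finset α)) (hS'' : IsIsolatedInvariantSet 𝒱' S'')
    (hSS'' : S ⊆ S'') :
    invPart 𝒱' (hull 𝒱' (S ∪ V)) ⊆ S'' := by
  obtain ⟨hinv'', N'', hN''cl, hFN'', hiso⟩ := hS''
  -- S'' ⊆ K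
  have hS''K : S'' ⊆ (K : Set (Finset α)) := by
    rw [← hinv'']; exact invPart_subset_K 𝒱' S''
  -- S'' ⊆ N''
  have hS''N : S'' ⊆ N'' := fun σ hσ =>
    hFN'' (Set.mem_biUnion hσ (self_mem_Fv 𝒱' (hS''K hσ)))
  -- three-step path lemma
  have three : ∀ σ τ σ' : Finset α, σ ∈ S'' → σ' ∈ S'' → τ ∈ N'' →
      τ ∈ Fv 𝒱' σ → σ' ∈ Fv 𝒱' τ → τ ∈ S'' := by
    intro σ τ σ' hσ hσ' hτN h1 h2
    set ρ : ℕ → Finset α := fun i => match i with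
      | 0 => σ | 1 => τ | _ => σ' with hρ
    have hpath : IsPathIn 𝒱' N'' 2 ρ := by
      constructor
      · intro i hi
        interval_cases i
        · exact h1
        · exact h2
      · intro i hi
        interval_cases i
        · exact hS''N hσ
        · exact hτN
        · exact hS''N hσ'
    have := hiso 2 ρ hpath hσ hσ' 1 (by norm_num)
    exact this
  -- membership of a simplex in the multivector V implies membership in Fv
  have mv_mem : ∀ (W : Set (Finset α)), W ∈ 𝒱'.vecs → ∀ σ τ, σ ∈ W → τ ∈ W →
      τ ∈ Fv 𝒱' σ := by
    intro W hW σ τ hσW hτW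
    exact Or.inr ⟨W, ⟨hW, hσW⟩, hτW⟩
  -- same-vector absorption into S''
  have absorb : ∀ (W : Set (Finset α)), W ∈ 𝒱'.vecs → ∀ σ τ, σ ∈ W → τ ∈ W →
      σ ∈ S'' → τ ∈ S'' := by
    intro W hW σ τ hσW hτW hσS
    refine three σ τ σ hσS hσS ?_ (mv_mem W hW σ τ hσW hτW) (mv_mem W hW τ σ hτW hσW)
    exact hFN'' (Set.mem_biUnion hσS (mv_mem W hW σ τ hσW hτW))
  -- S'' is 𝒱'-compatible
  have hcomp : IsCompatible 𝒱' S'' := by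
    refine ⟨{W | W ∈ 𝒱'.vecs ∧ (W ∩ S'').Nonempty}, fun W hW => hW.1, ?_⟩
    apply Set.Subset.antisymm
    · intro σ hσ
      obtain ⟨W, hW, hσW⟩ := 𝒱'.cover σ (hS''K hσ)
      exact ⟨W, ⟨hW, σ, hσW, hσ⟩, hσW⟩
    · rintro τ ⟨W, ⟨hW, σ0, hσ0W, hσ0S⟩, hτW⟩
      exact absorb W hW σ0 τ hσ0W hτW hσ0S
  -- S'' is convex
  have hconv : IsConvex K S'' := by
    intro σ hσ τ hτ ρ hρK hσρ hρτ
    have h1 : ρ ∈ Fv 𝒱' τ := Or.inl ⟨hρK, τ, rfl, hρτ⟩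
    have h2 : σ ∈ Fv 𝒱' ρ := Or.inl ⟨hS''K hσ, ρ, rfl, hσρ⟩
    exact three τ ρ σ hτ hσ (hFN'' (Set.mem_biUnion hτ h1)) h1 h2
  -- V ⊆ S''
  have hVsub : V ⊆ S'' := by
    obtain ⟨σ0, hσ0V, hσ0S⟩ := hVS
    intro τ hτV
    exact absorb V hV.1 σ0 τ hσ0V hτV (hSS'' hσ0S)
  -- hull (S ∪ V) ⊆ S''
  have hhull : hull 𝒱' (S ∪ V) ⊆ S'' :=
    Set.sInter_subset_of_mem ⟨hS''K, hconv, hcomp, Set.union_subset hSS'' hVsub⟩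
  rintro σ ⟨ρ, _, hρA, i, rfl⟩
  exact hhull (hρA i)

end CDS
end
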